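/- Let τ be a natural number, let a, a⁺ be the truncated ladder operators on ℂ^{τ+1} (a e_0 = 0, a e_n = √n · e_{n−1} for 1 ≤ n ≤ τ; a⁺ e_n = √(n+1) · e_{n+1} for n < τ, a⁺ e_τ = 0), and let N = a⁺ ∘ a be the number operator. Then the exact commutation relations [N, a⁺] = N ∘ a⁺ − a⁺ ∘ N = a⁺ and [N, a] = N ∘ a − a ∘ N = −a hold, with no correction term from the truncation. -/
import Mathlib

lemma sqrt_mul_self_complex (n : ℕ) :
    ((Real.sqrt n : ℝ) : ℂ) * ((Real.sqrt n : ℝ) : ℂ) = (n : ℂ) := by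
  rw [← Complex.ofReal_mul, Real.mul_self_sqrt (Nat.cast_nonneg n)]
  norm_cast

/-- The number operator `N = a⁺ ∘ a` built from the truncated ladder operators on
`ℂ^{τ+1}` satisfies the exact commutation relations `[N, a⁺] = a⁺` and `[N, a] = −a`,
with no correction from the truncation. -/
theorem number_operator_commutators (τ : ℕ)
    (a adag : EuclideanSpace ℂ (Fin (τ + 1)) →ₗ[ℂ] EuclideanSpace ℂ (Fin (τ + 1)))
    (ha0 : a (EuclideanSpace.single (⟨0, Nat.succ_pos τ⟩ : Fin (τ + 1)) 1) = 0)
    (ha : ∀ (n : ℕ) (h1 : 1 ≤ n) (h2 : n ≤ τ),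
      a (EuclideanSpace.single (⟨n, by omega⟩ : Fin (τ + 1)) 1) =
        ((Real.sqrt n : ℝ) : ℂ) •
          EuclideanSpace.single (⟨n - 1, by omega⟩ : Fin (τ + 1)) 1)
    (hadag : ∀ (n : ℕ) (h : n < τ),
      adag (EuclideanSpace.single (⟨n, by omega⟩ : Fin (τ + 1)) 1) =
        ((Real.sqrt (n + 1) : ℝ) : ℂ) •
          EuclideanSpace.single (⟨n + 1, by omega⟩ : Fin (τ + 1)) 1)
    (hadagτ : adag (EuclideanSpace.single (⟨τ, Nat.lt_succ_self τ⟩ : Fin (τ + 1)) 1) = 0) :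
    (adag ∘ₗ a) ∘ₗ adag - adag ∘ₗ (adag ∘ₗ a) = adag ∧
    (adag ∘ₗ a) ∘ₗ a - a ∘ₗ (adag ∘ₗ a) = -a := by
  -- N on basis vectors
  have hN : ∀ (n : ℕ) (h : n ≤ τ),
      adag (a (EuclideanSpace.single (⟨n, by omega⟩ : Fin (τ + 1)) 1)) =
        (n : ℂ) • EuclideanSpace.single (⟨n, by omega⟩ : Fin (τ + 1)) 1 := by
    intro n h
    rcases Nat.eq_zero_or_pos n with rfl | hn
    · rw [ha0, map_zero]
      simp
    · have h1 : 1 ≤ n := hn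
      have hlt : n - 1 < τ := by omega
      rw [ha n h1 h, map_smul, hadag (n - 1) hlt, smul_smul]
      have hidx : (⟨n - 1 + 1, by omega⟩ : Fin (τ + 1)) = ⟨n, by omega⟩ := by
        simp [Nat.sub_add_cancel h1]
      rw [hidx]
      congr 1
      rw [show ((n - 1 : ℕ) : ℝ) + 1 = (n : ℝ) by push_cast [h1]; ring]
      exact sqrt_mul_self_complex n
  constructor
  · apply Module.Basis.ext (EuclideanSpace.basisFun (Fin (τ + 1)) ℂ).toBasis
    rintro ⟨n, hn⟩
    have hτ : n ≤ τ := by omega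
    simp only [OrthonormalBasis.coe_toBasis, EuclideanSpace.basisFun_apply,
      LinearMap.sub_apply, LinearMap.comp_apply]
    rcases eq_or_lt_of_le hτ with rfl | hlt
    · rw [hadagτ, map_zero, map_zero, hN n le_rfl, map_smul, hadagτ]
      simp
    · rw [hadag n hlt]
      simp only [map_smul]
      rw [hN (n + 1) (by omega), hN n hτ]
      simp only [map_smul]
      rw [hadag n hlt]
      simp only [smul_smul]
      rw [← sub_smul]
      congr 1
      push_cast
      ring
  · apply Module.Basis.ext (EuclideanSpace.basisFun (Fin (τ + 1)) ℂ).toBasis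
    rintro ⟨n, hn⟩
    have hτ : n ≤ τ := by omega
    simp only [OrthonormalBasis.coe_toBasis, EuclideanSpace.basisFun_apply,
      LinearMap.sub_apply, LinearMap.comp_apply, LinearMap.neg_apply]
    rcases Nat.eq_zero_or_pos n with rfl | hpos
    · rw [ha0, map_zero, map_zero, map_zero]
      simp
    · have h1 : 1 ≤ n := hpos
      have hlt : n - 1 < τ := by omega
      rw [ha n h1 hτ]
      simp only [map_smul]
      rw [hN (n - 1) (by omega), hadag (n - 1) hlt]
      simp only [map_smul]
      have hidx : (⟨n - 1 + 1, by omega⟩ : Fin (τ + 1)) = ⟨n, by omega⟩ := by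
        simp [Nat.sub_add_cancel h1]
      rw [hidx, ha n h1 hτ]
      simp only [smul_smul]
      rw [← sub_smul, ← neg_smul]
      congr 1
      rw [show ((n - 1 : ℕ) : ℝ) + 1 = (n : ℝ) by push_cast [h1]; ring,
        show ((n - 1 : ℕ) : ℂ) = (n : ℂ) - 1 by push_cast [h1]; ring]
      linear_combination (-((Real.sqrt n : ℝ) : ℂ)) * sqrt_mul_self_complex n
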